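/- For any integers n and k with 2 ≤ k ≤ ⌊n/2⌋, the outer-independent total Roman domination number of the circulant graph C(n,k) equals n − ⌊⌊n/(k+1)⌋/2⌋, i.e., γ_oitR(C(n,k)) = n − ⌊⌊n/(k+1)⌋/2⌋. -/

import Mathlib

/-!
The zeros of an outer-independent Roman dominating function on `C(n,k)` form an independent
set, and the windows `z + [0,k]` of independent vertices are pairwise disjoint, so there are
at most `q = ⌊n/(k+1)⌋` zeros. The neighbourhood of a vertex `c` is covered by the two cliques
`c + [1,k]` and `c - [1,k]`, so `C(n,k)` is claw-free and each vertex of weight 2 dominates at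
most two zeros. With `n₀` zeros and `n₂` twos the weight `n - n₀ + n₂` is therefore at least
`n - ⌊n₀/2⌋ ≥ n - ⌊q/2⌋`.

Equality is attained with zeros at `(k+1)s` for `s < 2⌊q/2⌋` and a two right after every zero
of even index; `k ≥ 2` makes each vertex adjacent to `v+1` and `v+2`, which are never both
zeros.
-/

namespace OITRPaper

variable {V : Type*}

/-- `S` is a vertex cover of `G`: every edge of `G` is incident to a vertex of `S`. -/
def IsVertexCover (G : SimpleGraph V) (S : Set V) : Prop :=
  ∀ ⦃u v : V⦄, G.Adj u v → u ∈ S ∨ v ∈ S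

/-- `S` is an independent set of `G`: no two vertices of `S` are adjacent. -/
def IsIndepSet (G : SimpleGraph V) (S : Set V) : Prop :=
  ∀ ⦃u : V⦄, u ∈ S → ∀ ⦃v : V⦄, v ∈ S → ¬ G.Adj u v

/-- `S` is a dominating set of `G`. -/
def IsDomSet (G : SimpleGraph V) (S : Set V) : Prop :=
  ∀ v : V, v ∉ S → ∃ u ∈ S, G.Adj v u

/-- `S` is a total dominating set of `G`: every vertex has a neighbor in `S`. -/
def IsTotalDomSet (G : SimpleGraph V) (S : Set V) : Prop :=
  ∀ v : V, ∃ u ∈ S, G.Adj v u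

/-- `G` is claw-free: it contains no induced `K_{1,3}`. -/
def ClawFree (G : SimpleGraph V) : Prop :=
  ∀ c a b d : V, G.Adj c a → G.Adj c b → G.Adj c d →
    a ≠ b → a ≠ d → b ≠ d → G.Adj a b ∨ G.Adj a d ∨ G.Adj b d

/-- `f` is a Roman dominating function on `G`. -/
def IsRDF (G : SimpleGraph V) (f : V → ℕ) : Prop :=
  (∀ v, f v ≤ 2) ∧ ∀ v, f v = 0 → ∃ u, G.Adj v u ∧ f u = 2

/-- `f` is an outer-independent Roman dominating function on `G`. -/
def IsOIRDF (G : SimpleGraph V) (f : V → ℕ) : Prop :=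
  IsRDF G f ∧ IsIndepSet G {v | f v = 0}

/-- `f` is an outer-independent total Roman dominating function on `G`. -/
def IsOITRDF (G : SimpleGraph V) (f : V → ℕ) : Prop :=
  IsOIRDF G f ∧ ∀ v, 1 ≤ f v → ∃ u, G.Adj v u ∧ 1 ≤ f u

variable [Fintype V]

/-- The vertex cover number `α(G)`. -/
noncomputable def vertexCoverNum (G : SimpleGraph V) : ℕ :=
  sInf {m | ∃ S : Set V, IsVertexCover G S ∧ S.ncard = m}

/-- The independence number `β(G)`. -/
noncomputable def indepNum (G : SimpleGraph V) : ℕ :=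
  sSup {m | ∃ S : Set V, IsIndepSet G S ∧ S.ncard = m}

/-- The domination number `γ(G)`. -/
noncomputable def domNum (G : SimpleGraph V) : ℕ :=
  sInf {m | ∃ S : Set V, IsDomSet G S ∧ S.ncard = m}

/-- The total domination number `γ_t(G)`. -/
noncomputable def totalDomNum (G : SimpleGraph V) : ℕ :=
  sInf {m | ∃ S : Set V, IsTotalDomSet G S ∧ S.ncard = m}

/-- The outer-independent total domination number `γ_{t,oi}(G)`. -/
noncomputable def oiTotalDomNum (G : SimpleGraph V) : ℕ :=
  sInf {m | ∃ S : Set V, IsTotalDomSet G S ∧ IsIndepSet G Sᶜ ∧ S.ncard = m}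

/-- The Roman domination number `γ_R(G)`. -/
noncomputable def romanDomNum (G : SimpleGraph V) : ℕ :=
  sInf {w | ∃ f : V → ℕ, IsRDF G f ∧ ∑ v, f v = w}

/-- The outer-independent Roman domination number `γ_{oiR}(G)`. -/
noncomputable def oiRomanDomNum (G : SimpleGraph V) : ℕ :=
  sInf {w | ∃ f : V → ℕ, IsOIRDF G f ∧ ∑ v, f v = w}

/-- The outer-independent total Roman domination number `γ_{oitR}(G)`. -/
noncomputable def oitRomanDomNum (G : SimpleGraph V) : ℕ :=
  sInf {w | ∃ f : V → ℕ, IsOITRDF G f ∧ ∑ v, f v = w}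


/-- The circulant graph `C(n,k)` on vertex set `ℤ/nℤ` (modelled as `Fin n`):
distinct vertices `i, j` are adjacent iff `j ≡ i + t (mod n)` or `i ≡ j + t (mod n)`
for some `t ∈ {1, …, k}`. -/
def circulant (n k : ℕ) : SimpleGraph (Fin n) where
  Adj i j := i ≠ j ∧ ∃ t : ℕ, 1 ≤ t ∧ t ≤ k ∧
      ((i.val + t) % n = j.val ∨ (j.val + t) % n = i.val)
  symm := by
    constructor
    rintro i j ⟨hij, t, h1, h2, h⟩
    exact ⟨hij.symm, t, h1, h2, h.symm⟩
  loopless := ⟨fun i h => h.1 rfl⟩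

/-- The wheel graph `W_n` of order `n`: a universal hub vertex (`none`) joined to all
vertices of a cycle of order `n - 1`. -/
def wheel (n : ℕ) : SimpleGraph (Option (Fin (n - 1))) where
  Adj x y :=
    match x, y with
    | none, none => False
    | none, some _ => True
    | some _, none => True
    | some i, some j => i ≠ j ∧
        ((i.val + 1) % (n - 1) = j.val ∨ (j.val + 1) % (n - 1) = i.val)
  symm := by
    constructor
    rintro (_ | i) (_ | j) h <;> simp_all
    exact ⟨Ne.symm h.1, h.2.symm⟩
  loopless := by
    constructor
    rintro (_ | i) h <;> simp_all

/-- The direct (tensor) product of two simple graphs. -/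
def directProd {α β : Type*} (G : SimpleGraph α) (H : SimpleGraph β) :
    SimpleGraph (α × β) where
  Adj x y := G.Adj x.1 y.1 ∧ H.Adj x.2 y.2
  symm := ⟨fun _ _ ⟨h1, h2⟩ => ⟨h1.symm, h2.symm⟩⟩
  loopless := ⟨fun x h => G.loopless.irrefl x.1 h.1⟩

end OITRPaper

namespace OITRPaper

open Finset Fin.CommRing

section RomanDomination

variable {V : Type*} {G : SimpleGraph V}

theorem ClawFree.card_le_two (hG : ClawFree G) {S : Finset V} (hS : IsIndepSet G S) {u : V}
    (hSu : ∀ v ∈ S, G.Adj v u) : #S ≤ 2 := by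
  by_contra! h
  obtain ⟨a, b, c, ha, hb, hc, hab, hac, hbc⟩ := two_lt_card_iff.mp h
  rcases hG u a b c (hSu a ha).symm (hSu b hb).symm (hSu c hc).symm hab hac hbc with h | h | h
  · exact hS ha hb h
  · exact hS ha hc h
  · exact hS hb hc h

theorem clawFree_of_neighborSet_subset_union
    (h : ∀ c, ∃ A B : Set V, G.IsClique A ∧ G.IsClique B ∧ G.neighborSet c ⊆ A ∪ B) :
    ClawFree G := by
  intro c a b d hca hcb hcd hab had hbd
  obtain ⟨A, B, hA, hB, hN⟩ := h c
  rcases hN hca with ha | ha <;> rcases hN hcb with hb | hb <;> rcases hN hcd with hd | hd <;>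
  first
  | exact .inl (hA ha hb hab) | exact .inl (hB ha hb hab)
  | exact .inr (.inl (hA ha hd had)) | exact .inr (.inl (hB ha hd had))
  | exact .inr (.inr (hA hb hd hbd)) | exact .inr (.inr (hB hb hd hbd))

variable [Fintype V]

theorem sum_add_card_filter_eq_zero {f : V → ℕ} (hf : ∀ v, f v ≤ 2) :
    ∑ v, f v + #{v | f v = 0} = Fintype.card V + #{v | f v = 2} := by
  rw [card_filter, card_filter, ← card_univ, card_eq_sum_ones, ← sum_add_distrib,
    ← sum_add_distrib]
  refine sum_congr rfl fun v _ => ?_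
  have := hf v
  interval_cases f v <;> rfl

theorem IsOIRDF.card_zero_le (hG : ClawFree G) {f : V → ℕ} (hf : IsOIRDF G f) :
    #{v | f v = 0} ≤ 2 * #{v | f v = 2} := by
  classical
  have := card_mul_le_card_mul (r := G.Adj) (s := {v | f v = 0}) (t := {v | f v = 2})
    (m := 1) (n := 2) ?_ ?_
  · omega
  · intro a ha
    obtain ⟨u, hau, hu⟩ := hf.1.2 a (mem_filter.1 ha).2
    exact card_pos.2 ⟨u, (mem_bipartiteAbove _).2 ⟨mem_filter.2 ⟨mem_univ _, hu⟩, hau⟩⟩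
  · intro u _
    refine hG.card_le_two (fun a ha b hb => hf.2 ?_ ?_) fun v hv => ((mem_bipartiteBelow _).1 hv).2
    · exact (mem_filter.1 ((mem_bipartiteBelow _).1 ha).1).2
    · exact (mem_filter.1 ((mem_bipartiteBelow _).1 hb).1).2

theorem IsOIRDF.card_sub_le_sum (hG : ClawFree G) {q : ℕ}
    (hq : ∀ S : Finset V, IsIndepSet G S → #S ≤ q) {f : V → ℕ} (hf : IsOIRDF G f) :
    Fintype.card V - q / 2 ≤ ∑ v, f v := by
  have hsum := sum_add_card_filter_eq_zero hf.1.1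
  have hZ := hq {v | f v = 0} fun a ha b hb => hf.2 (mem_filter.1 ha).2 (mem_filter.1 hb).2
  have hZT := hf.card_zero_le hG
  omega

end RomanDomination

section Circulant

variable {n k : ℕ} [NeZero n]

theorem natCast_injOn_Iio : Set.InjOn (fun a : ℕ => (a : Fin n)) (Set.Iio n) :=
  fun a ha b hb h => by
    simpa [Fin.val_cast_of_lt ha, Fin.val_cast_of_lt hb] using congrArg Fin.val h

theorem circulant_adj_iff {i j : Fin n} :
    (circulant n k).Adj i j ↔ i ≠ j ∧ ∃ t : ℕ, 1 ≤ t ∧ t ≤ k ∧ (j = i + t ∨ i = j + t) := by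
  have h (a b : Fin n) (t : ℕ) : (a.val + t) % n = b.val ↔ b = a + t := by
    rw [Fin.ext_iff, Fin.val_add, Fin.val_natCast, Nat.add_mod_mod, eq_comm]
  simp only [circulant, h]

theorem circulant_adj_add_natCast (hkn : k < n) (i : Fin n) {t : ℕ} (ht : 1 ≤ t) (htk : t ≤ k) :
    (circulant n k).Adj i (i + t) := by
  refine circulant_adj_iff.2 ⟨fun h => ?_, t, ht, htk, .inl rfl⟩
  have : n ∣ t := by simpa using h
  exact absurd (Nat.le_of_dvd (by omega) this) (by omega)

theorem circulant_adj_of_add_eq_add (hkn : k < n) {x y : Fin n} {s t : ℕ} (hs : s ≤ k)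
    (ht : t ≤ k) (hxy : x ≠ y) (h : x + s = y + t) : (circulant n k).Adj x y := by
  wlog hts : t ≤ s generalizing x y s t
  · exact (this ht hs hxy.symm h.symm (by omega)).symm
  have hy : y = x + ↑(s - t) := by
    rw [Nat.cast_sub hts, ← add_sub_assoc, h, add_sub_cancel_right]
  obtain rfl | hlt := hts.eq_or_lt
  · exact absurd (by simpa using hy.symm) hxy
  · rw [hy]
    exact circulant_adj_add_natCast hkn x (by omega) (by omega)

theorem circulant_card_le_of_isIndepSet (hkn : k < n) {S : Finset (Fin n)}
    (hS : IsIndepSet (circulant n k) S) : #S ≤ n / (k + 1) := by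
  rw [Nat.le_div_iff_mul_le (by omega), ← card_range (k + 1), ← card_product]
  refine (card_le_card_of_injOn (t := univ) (fun p => p.1 + (p.2 : Fin n))
    (fun _ _ => mem_coe.2 (mem_univ _)) ?_).trans_eq (by simp)
  rintro ⟨x, s⟩ hxs ⟨y, t⟩ hyt h
  simp only [coe_product, Set.mem_prod, mem_coe, coe_range, Set.mem_Iio] at hxs hyt
  obtain rfl : x = y := by
    by_contra hxy
    exact hS hxs.1 hyt.1 (circulant_adj_of_add_eq_add hkn (by omega) (by omega) hxy h)
  have : s = t := natCast_injOn_Iio (by simp; omega) (by simp; omega) (add_left_cancel h)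
  rw [this]

theorem circulant_clawFree (hkn : k < n) : ClawFree (circulant n k) := by
  refine clawFree_of_neighborSet_subset_union fun c =>
    ⟨{x | ∃ t ≤ k, x = c + t}, {x | ∃ t ≤ k, c = x + t}, ?_, ?_, ?_⟩
  · rintro x ⟨s, hs, rfl⟩ y ⟨t, ht, rfl⟩ hxy
    exact circulant_adj_of_add_eq_add hkn ht hs hxy (by ring)
  · rintro x ⟨s, hs, hx⟩ y ⟨t, ht, hy⟩ hxy
    exact circulant_adj_of_add_eq_add hkn hs ht hxy (hx.symm.trans hy)
  · intro x hx
    obtain ⟨-, t, -, htk, h | h⟩ := circulant_adj_iff.1 hx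
    · exact .inl ⟨t, htk, h⟩
    · exact .inr ⟨t, htk, h⟩

end Circulant

theorem mul_add_lt_of_lt {d m n s t : ℕ} (hm : d * m ≤ n) (hs : s < m) (ht : t < d) :
    d * s + t < n := by
  nlinarith

section Construction

variable (n k m : ℕ) [NeZero n]

def extremalZeros : Finset (Fin n) := (range (2 * m)).image fun s => (((k + 1) * s : ℕ) : Fin n)

def extremalTwos : Finset (Fin n) := (range m).image fun j => (((k + 1) * (2 * j) + 1 : ℕ) : Fin n)

def extremalFun (v : Fin n) : ℕ :=
  if v ∈ extremalZeros n k m then 0 else if v ∈ extremalTwos n k m then 2 else 1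

variable {n k m}

theorem extremalFun_le_two (v : Fin n) : extremalFun n k m v ≤ 2 := by
  unfold extremalFun; split_ifs <;> omega

theorem extremalFun_eq_zero_iff {v : Fin n} :
    extremalFun n k m v = 0 ↔ v ∈ extremalZeros n k m := by
  unfold extremalFun; split_ifs <;> simp_all

theorem one_le_extremalFun_iff {v : Fin n} : 1 ≤ extremalFun n k m v ↔ v ∉ extremalZeros n k m := by
  rw [Nat.one_le_iff_ne_zero, Ne, extremalFun_eq_zero_iff]

theorem add_natCast_notMem_extremalZeros (hm : (k + 1) * (2 * m) ≤ n) {a : Fin n}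
    (ha : a ∈ extremalZeros n k m) {t : ℕ} (ht : 1 ≤ t) (htk : t ≤ k) :
    a + t ∉ extremalZeros n k m := by
  simp only [extremalZeros, mem_image, mem_range] at ha ⊢
  obtain ⟨s, hs, rfl⟩ := ha
  rintro ⟨s', hs', h⟩
  rw [← Nat.cast_add] at h
  have h' := natCast_injOn_Iio (mul_add_lt_of_lt hm hs' (Nat.succ_pos k))
    (mul_add_lt_of_lt hm hs (Nat.lt_succ_of_le htk)) h
  have : k + 1 ∣ t := (Nat.dvd_add_right (dvd_mul_right _ s)).1 (h' ▸ dvd_mul_right _ s')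
  exact absurd (Nat.le_of_dvd ht this) (by omega)

theorem disjoint_extremalZeros_extremalTwos (hk : 1 ≤ k) (hm : (k + 1) * (2 * m) ≤ n) :
    Disjoint (extremalZeros n k m) (extremalTwos n k m) := by
  rw [disjoint_right]
  simp only [extremalTwos, mem_image, mem_range]
  rintro _ ⟨j, hj, rfl⟩
  rw [Nat.cast_add]
  exact add_natCast_notMem_extremalZeros hm (mem_image_of_mem _ (mem_range.2 (by omega))) le_rfl hk

theorem extremalFun_eq_two_iff (hk : 1 ≤ k) (hm : (k + 1) * (2 * m) ≤ n) {v : Fin n} :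
    extremalFun n k m v = 2 ↔ v ∈ extremalTwos n k m := by
  have : v ∈ extremalTwos n k m → v ∉ extremalZeros n k m := fun h =>
    disjoint_right.1 (disjoint_extremalZeros_extremalTwos hk hm) h
  unfold extremalFun; split_ifs <;> simp_all

theorem card_extremalZeros (hm : (k + 1) * (2 * m) ≤ n) : #(extremalZeros n k m) = 2 * m := by
  rw [extremalZeros, card_image_of_injOn, card_range]
  intro s hs s' hs' h
  have hlt {s} (hs : s ∈ (range (2 * m) : Set ℕ)) : (k + 1) * s < n := by
    simpa using mul_add_lt_of_lt hm (mem_range.1 hs) (Nat.succ_pos k)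
  exact Nat.eq_of_mul_eq_mul_left (Nat.succ_pos k) (natCast_injOn_Iio (hlt hs) (hlt hs') h)

theorem card_extremalTwos (hk : 1 ≤ k) (hm : (k + 1) * (2 * m) ≤ n) :
    #(extremalTwos n k m) = m := by
  rw [extremalTwos, card_image_of_injOn, card_range]
  intro j hj j' hj' h
  have hlt {j} (hj : j ∈ (range m : Set ℕ)) : (k + 1) * (2 * j) + 1 < n :=
    mul_add_lt_of_lt hm (by simpa using hj) (by omega)
  have := Nat.eq_of_mul_eq_mul_left (Nat.succ_pos k)
    (Nat.add_right_cancel (natCast_injOn_Iio (hlt hj) (hlt hj') h))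
  omega

theorem exists_mem_extremalTwos_adj (hk : 1 ≤ k) (hkn : k < n) {v : Fin n}
    (hv : v ∈ extremalZeros n k m) : ∃ u ∈ extremalTwos n k m, (circulant n k).Adj v u := by
  simp only [extremalZeros, mem_image, mem_range] at hv
  obtain ⟨s, hs, rfl⟩ := hv
  obtain ⟨j, rfl | rfl⟩ := Nat.even_or_odd' s
  · refine ⟨_, mem_image_of_mem _ (mem_range.2 (show j < m by omega)), ?_⟩
    rw [Nat.cast_add]
    exact circulant_adj_add_natCast hkn _ le_rfl hk
  · refine ⟨_, mem_image_of_mem _ (mem_range.2 (show j < m by omega)), ?_⟩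
    have : (((k + 1) * (2 * j + 1) : ℕ) : Fin n) = (((k + 1) * (2 * j) + 1 : ℕ) : Fin n) + k := by
      push_cast
      ring
    rw [this]
    exact (circulant_adj_add_natCast hkn _ hk le_rfl).symm

theorem extremalFun_isOITRDF (hk : 2 ≤ k) (hkn : k < n) (hm : (k + 1) * (2 * m) ≤ n) :
    IsOITRDF (circulant n k) (extremalFun n k m) := by
  refine ⟨⟨⟨extremalFun_le_two, fun v hv => ?_⟩, fun a ha b hb hab => ?_⟩, fun v _ => ?_⟩
  · obtain ⟨u, hu, hvu⟩ := exists_mem_extremalTwos_adj (by omega) hkn (extremalFun_eq_zero_iff.1 hv)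
    exact ⟨u, hvu, (extremalFun_eq_two_iff (by omega) hm).2 hu⟩
  · replace ha := extremalFun_eq_zero_iff.1 ha
    replace hb := extremalFun_eq_zero_iff.1 hb
    obtain ⟨-, t, ht, htk, rfl | rfl⟩ := circulant_adj_iff.1 hab
    · exact add_natCast_notMem_extremalZeros hm ha ht htk hb
    · exact add_natCast_notMem_extremalZeros hm hb ht htk ha
  · by_cases h1 : v + (1 : ℕ) ∈ extremalZeros n k m
    · refine ⟨v + (2 : ℕ), circulant_adj_add_natCast hkn v (by omega) hk, ?_⟩
      have := add_natCast_notMem_extremalZeros hm h1 le_rfl (by omega)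
      rwa [add_assoc, ← Nat.cast_add, ← one_le_extremalFun_iff] at this
    · exact ⟨v + (1 : ℕ), circulant_adj_add_natCast hkn v le_rfl (by omega),
        one_le_extremalFun_iff.2 h1⟩

theorem sum_extremalFun (hk : 1 ≤ k) (hm : (k + 1) * (2 * m) ≤ n) :
    ∑ v, extremalFun n k m v = n - m := by
  have h := sum_add_card_filter_eq_zero (extremalFun_le_two (n := n) (k := k) (m := m))
  have h0 : ({v | extremalFun n k m v = 0} : Finset (Fin n)) = extremalZeros n k m := by
    ext v; simp [extremalFun_eq_zero_iff]
  have h2 : ({v | extremalFun n k m v = 2} : Finset (Fin n)) = extremalTwos n k m := by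
    ext v; simp [extremalFun_eq_two_iff hk hm]
  rw [h0, h2, card_extremalZeros hm, card_extremalTwos hk hm, Fintype.card_fin] at h
  omega

end Construction

/-- `γ_oitR(C(n,k)) = n - ⌊⌊n/(k+1)⌋/2⌋` for `2 ≤ k ≤ ⌊n/2⌋`. -/
theorem stmt12 (n k : ℕ) (hk2 : 2 ≤ k) (hkn : k ≤ n / 2) :
    oitRomanDomNum (circulant n k) = n - (n / (k + 1)) / 2 := by
  have hk : k < n := by omega
  have : NeZero n := ⟨by omega⟩
  have hm : (k + 1) * (2 * (n / (k + 1) / 2)) ≤ n :=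
    calc (k + 1) * (2 * (n / (k + 1) / 2)) ≤ (k + 1) * (n / (k + 1)) :=
          Nat.mul_le_mul_left _ (Nat.mul_div_le _ _)
      _ ≤ n := Nat.mul_div_le n (k + 1)
  refine IsLeast.csInf_eq ⟨⟨_, extremalFun_isOITRDF hk2 hk hm, sum_extremalFun (by omega) hm⟩, ?_⟩
  rintro _ ⟨f, hf, rfl⟩
  simpa using hf.1.card_sub_le_sum (circulant_clawFree hk)
    fun S hS => circulant_card_le_of_isIndepSet hk hS

end OITRPaper
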